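/- Let d ≥ 1, m = 2d, r, t ∈ ℂ, and let M = (ℤ^d →₀ ℂ) ⊗[ℂ] ℂ^m. For θ ∈ Fin m → ℝ define the walk operator U(θ) = Σ_{a∈Fin m} T_a ⊗ (e^{iθ_a} P_a G_{r,t}) as a linear endomorphism of M, where T_a sends the basis element δ_x to δ_{x + e(a)}. Then for any θ^{(1)},…,θ^{(n)}, the composition U(θ^{(1)}) ∘ ⋯ ∘ U(θ^{(n)}) applied to δ_0 ⊗ |s⟩ equals Σ_{(a_1,…,a_n)∈(Fin m)^n} e^{i(θ^{(1)}_{a_1} + ⋯ + θ^{(n)}_{a_n})} · Ξ(a_1,…,a_n) · ((r−t)/√m + √m·t) · (δ_{e(a_1)+⋯+e(a_n)} ⊗ |a_1⟩). -/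

import Mathlib

noncomputable section

open scoped BigOperators TensorProduct

/-- The complex Euclidean space `ℂ^m`. -/
abbrev H (m : ℕ) := EuclideanSpace ℂ (Fin m)

/-- The computational orthonormal basis vector `|a⟩`. -/
def ket {m : ℕ} (a : Fin m) : H m := EuclideanSpace.single a 1

/-- The uniform superposition `|s⟩ = (1/√m) Σ_a |a⟩`. -/
def ketS (m : ℕ) : H m := ((Real.sqrt m : ℂ))⁻¹ • ∑ a : Fin m, ket a

/-- The outer product `|x⟩⟨y|`, i.e. `v ↦ ⟪y, v⟫ • x`. -/
def outer {m : ℕ} (x y : H m) : H m →L[ℂ] H m := (innerSL ℂ y).smulRight x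

/-- The projection `P_a = |a⟩⟨a|`. -/
def P {m : ℕ} (a : Fin m) : H m →L[ℂ] H m := outer (ket a) (ket a)

/-- The generalized Grover coin `G_{r,t} = (r - t)·I + t·m·|s⟩⟨s|`. -/
def grover (m : ℕ) (r t : ℂ) : H m →L[ℂ] H m :=
  (r - t) • 1 + (t * m) • outer (ketS m) (ketS m)

/-- `Ξ(a_1, …, a_n) = ∏_{j=1}^{n-1} (t + (r - t) δ_{a_j, a_{j+1}})` (empty product is 1). -/
def Xi (m n : ℕ) (r t : ℂ) (a : Fin n → Fin m) : ℂ :=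
  ∏ j : Fin n, if h : (j : ℕ) + 1 < n then
    (t + (r - t) * (if a j = a ⟨(j : ℕ) + 1, h⟩ then 1 else 0)) else 1

/-- The `2d` signed standard basis vectors of `ℤ^d`: `e(2k) = u_k`, `e(2k+1) = -u_k`. -/
def eZ (d : ℕ) (a : Fin (2 * d)) : Fin d → ℤ :=
  Pi.single ⟨(a : ℕ) / 2, by have := a.2; omega⟩ (if (a : ℕ) % 2 = 0 then 1 else -1)

/-- The total Hilbert space `(ℤ^d →₀ ℂ) ⊗ ℂ^{2d}` of position ⊗ coin. -/
abbrev M (d : ℕ) := ((Fin d → ℤ) →₀ ℂ) ⊗[ℂ] H (2 * d)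

/-- The shift `T_a : δ_x ↦ δ_{x + e(a)}` on the position register. -/
def T (d : ℕ) (a : Fin (2 * d)) : ((Fin d → ℤ) →₀ ℂ) →ₗ[ℂ] ((Fin d → ℤ) →₀ ℂ) :=
  Finsupp.lmapDomain ℂ ℂ (fun x => x + eZ d a)

/-- One step `U(θ) = Σ_a T_a ⊗ (e^{iθ_a} P_a G_{r,t})` of the quantum walk with
random phase shifts. -/
def walkOp (d : ℕ) (r t : ℂ) (θ : Fin (2 * d) → ℝ) : Module.End ℂ (M d) :=
  ∑ a : Fin (2 * d),
    TensorProduct.map (T d a)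
      (Complex.exp (Complex.I * (θ a : ℂ)) • (P a * grover (2 * d) r t).toLinearMap)

/-!
Every coin step `P_a G_{r,t}` maps a coin state `v` to a multiple of `|a⟩`, namely
`((r - t) v_a + t Σ_b v_b) |a⟩`. On `|s⟩` the factor is `(r - t)/√m + √m t`, on `|b⟩` it is
`t + (r - t) δ_{a,b}`. So after the first step the state is a superposition of the product states
`δ_x ⊗ |a⟩`, and each further step in direction `a'` from `δ_x ⊗ |a⟩` contributes the phase
`e^{iθ_{a'}}` and the factor `t + (r - t) δ_{a',a}` of `Ξ`. Induction on `n`, peeling off the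
operator applied last, collects these factors.
-/

lemma natCast_div_sqrt (m : ℕ) : (m : ℂ) / (Real.sqrt m : ℂ) = Real.sqrt m := by
  exact_mod_cast Real.div_sqrt

section Coin

variable {m : ℕ}

lemma inner_ket (a : Fin m) (v : H m) : inner ℂ (ket a) v = v a := by
  simp [ket, EuclideanSpace.inner_single_left]

lemma P_apply (a : Fin m) (v : H m) : P a v = v a • ket a := by
  simp [P, outer, inner_ket]

lemma sum_ket_apply (b : Fin m) : ∑ c, ket b c = 1 := by
  simp [ket]

lemma ketS_apply (b : Fin m) : ketS m b = (Real.sqrt m : ℂ)⁻¹ := by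
  simp [ketS, ket]

lemma inner_ketS (v : H m) : inner ℂ (ketS m) v = (Real.sqrt m : ℂ)⁻¹ * ∑ b, v b := by
  simp [ketS, inner_ket, mul_comm]

lemma P_mul_grover_apply (r t : ℂ) (a : Fin m) (v : H m) :
    (P a * grover m r t) v = ((r - t) * v a + t * ∑ b, v b) • ket a := by
  have hm : (Real.sqrt m : ℂ) ≠ 0 := by
    exact_mod_cast Real.sqrt_ne_zero'.mpr (Nat.cast_pos.mpr a.pos)
  simp only [mul_apply_eq_comp, P_apply, grover, outer, add_apply, smul_apply, one_apply_eq_self,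
    ContinuousLinearMap.smulRight_apply, innerSL_apply_apply, inner_ketS, PiLp.add_apply,
    PiLp.smul_apply, ketS_apply, smul_eq_mul]
  congr 1
  rw [← div_mul_cancel₀ (m : ℂ) hm, natCast_div_sqrt]
  field_simp

lemma P_mul_grover_ket (r t : ℂ) (a b : Fin m) :
    (P a * grover m r t) (ket b) = (t + (r - t) * if a = b then 1 else 0) • ket a := by
  rw [P_mul_grover_apply, sum_ket_apply]
  simp [ket, add_comm]

lemma P_mul_grover_ketS (r t : ℂ) (a : Fin m) :
    (P a * grover m r t) (ketS m) =
      ((r - t) / (Real.sqrt m : ℂ) + (Real.sqrt m : ℂ) * t) • ket a := by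
  simp only [P_mul_grover_apply, ketS_apply, Finset.sum_const, Finset.card_univ, Fintype.card_fin,
    nsmul_eq_mul]
  congr 1
  linear_combination t * natCast_div_sqrt m

end Coin

section Walk

variable {d : ℕ} (r t : ℂ) (θ : Fin (2 * d) → ℝ) (x : Fin d → ℤ)

lemma walkOp_single_tmul (v : H (2 * d)) :
    walkOp d r t θ (Finsupp.single x 1 ⊗ₜ[ℂ] v) =
      ∑ a, Finsupp.single (x + eZ d a) (1 : ℂ) ⊗ₜ[ℂ]
        (Complex.exp (Complex.I * θ a) • (P a * grover (2 * d) r t) v) := by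
  simp [walkOp, T, Finsupp.mapDomain_single]

lemma walkOp_single_tmul_ket (b : Fin (2 * d)) :
    walkOp d r t θ (Finsupp.single x 1 ⊗ₜ[ℂ] ket b) =
      ∑ a, (Complex.exp (Complex.I * θ a) * (t + (r - t) * if a = b then 1 else 0)) •
        (Finsupp.single (x + eZ d a) (1 : ℂ) ⊗ₜ[ℂ] ket a) := by
  simp only [walkOp_single_tmul, P_mul_grover_ket, smul_smul, TensorProduct.tmul_smul]

lemma walkOp_single_tmul_ketS :
    walkOp d r t θ (Finsupp.single x 1 ⊗ₜ[ℂ] ketS (2 * d)) =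
      ∑ a, (Complex.exp (Complex.I * θ a) *
          ((r - t) / (Real.sqrt (2 * d) : ℂ) + (Real.sqrt (2 * d) : ℂ) * t)) •
        (Finsupp.single (x + eZ d a) (1 : ℂ) ⊗ₜ[ℂ] ket a) := by
  simp only [walkOp_single_tmul, P_mul_grover_ketS, smul_smul, TensorProduct.tmul_smul]
  push_cast
  rfl

end Walk

lemma Xi_cons {m n : ℕ} (hn : 0 < n) (r t : ℂ) (a₀ : Fin m) (a : Fin n → Fin m) :
    Xi m (n + 1) r t (Fin.cons a₀ a) =
      (t + (r - t) * if a₀ = a ⟨0, hn⟩ then 1 else 0) * Xi m n r t a := by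
  have hcons (k : ℕ) (h : k + 1 < n + 1) :
      (Fin.cons a₀ a : Fin (n + 1) → Fin m) ⟨k + 1, h⟩ = a ⟨k, by omega⟩ := rfl
  simp only [Xi, Fin.prod_univ_succ, Fin.val_zero, Fin.val_succ, hcons, Fin.cons_zero,
    Fin.cons_succ, add_lt_add_iff_right, hn, dite_true]

lemma sum_tuple_succ_eq_sum_cons {α R : Type*} [Fintype α] [AddCommMonoid R] {n : ℕ}
    (f : (Fin (n + 1) → α) → R) : ∑ a, f a = ∑ a₀, ∑ a : Fin n → α, f (Fin.cons a₀ a) := by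
  rw [← (Fin.consEquiv fun _ => α).sum_comp, Fintype.sum_prod_type]
  rfl

theorem walkOp_prod_single_tmul_ketS {d : ℕ} (r t : ℂ) {n : ℕ} (hn : 1 ≤ n)
    (θ : Fin n → Fin (2 * d) → ℝ) (x : Fin d → ℤ) :
    (List.ofFn (fun j : Fin n => walkOp d r t (θ j))).prod
        (Finsupp.single x (1 : ℂ) ⊗ₜ[ℂ] ketS (2 * d))
      = ∑ a : Fin n → Fin (2 * d),
          (Complex.exp (Complex.I * ((∑ j : Fin n, θ j (a j) : ℝ) : ℂ)) *
            Xi (2 * d) n r t a *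
            ((r - t) / (Real.sqrt (2 * d) : ℂ) + (Real.sqrt (2 * d) : ℂ) * t)) •
            (Finsupp.single (x + ∑ j : Fin n, eZ d (a j)) (1 : ℂ) ⊗ₜ[ℂ] ket (a ⟨0, hn⟩)) := by
  induction n, hn using Nat.le_induction generalizing x with
  | base =>
    rw [← (Equiv.funUnique (Fin 1) (Fin (2 * d))).symm.sum_comp]
    simp [walkOp_single_tmul_ketS, Xi]
  | succ n hn ih =>
    rw [List.ofFn_succ, List.prod_cons, Module.End.mul_apply, ih, map_sum,
      sum_tuple_succ_eq_sum_cons, Finset.sum_comm]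
    refine Finset.sum_congr rfl fun a _ => ?_
    rw [map_smul, walkOp_single_tmul_ket, Finset.smul_sum]
    refine Finset.sum_congr rfl fun a₀ _ => ?_
    simp only [Xi_cons hn, smul_smul, Fin.sum_univ_succ, Fin.cons_zero, Fin.cons_succ]
    congr 1
    · push_cast
      rw [mul_add Complex.I, Complex.exp_add]
      ring
    · congr 2
      abel

/-- Lemma 3 / Lemma 4 of the paper: the `n`-step evolution of the quantum walk
with random phase shifts applied to `δ_0 ⊗ |s⟩`. -/
theorem walk_evolution (d : ℕ) (r t : ℂ) (n : ℕ) (hn : 1 ≤ n)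
    (θ : Fin n → Fin (2 * d) → ℝ) :
    (List.ofFn (fun j : Fin n => walkOp d r t (θ j))).prod
        (Finsupp.single (0 : Fin d → ℤ) (1 : ℂ) ⊗ₜ[ℂ] ketS (2 * d))
      = ∑ a : Fin n → Fin (2 * d),
          (Complex.exp (Complex.I * ((∑ j : Fin n, θ j (a j) : ℝ) : ℂ)) *
            Xi (2 * d) n r t a *
            ((r - t) / (Real.sqrt (2 * d) : ℂ) + (Real.sqrt (2 * d) : ℂ) * t)) •
            (Finsupp.single (∑ j : Fin n, eZ d (a j)) (1 : ℂ) ⊗ₜ[ℂ]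
              ket (a ⟨0, by omega⟩)) := by
  simpa using walkOp_prod_single_tmul_ketS r t hn θ 0
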